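/- arXiv:1402.2597 — 2 statements merged into one kernel-verified Lean document; each statement's English description precedes it below -/
import Mathlib

section
/- Let 𝔖 ⊂ ℕ^2 be a simplicial affine circle semigroup with minimal generating set {n_1,…,n_m}, cone 𝒞, extremal rays τ_1, τ_2, and 𝔖̄ = {a ∈ ℕ^2 : a + n_i ∈ 𝔖 for all i}. Then 𝔖 is Buchsbaum if and only if int(𝒞) = int(𝔖̄) and 𝔖̄ ∩ τ_j is generated by a single element for j = 1, 2. -/
open Set
open scoped Pointwise

/-- Coercion of a lattice point of `ℕ²` into `ℚ²`. -/
def toQ (x : Fin 2 → ℕ) : Fin 2 → ℚ := fun i => (x i : ℚ)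

/-- The rational cone `L_{ℚ≥}(G)` generated by a subset `G ⊆ ℚ²`. -/
def coneQ (G : Set (Fin 2 → ℚ)) : Set (Fin 2 → ℚ) :=
  {x | ∃ (n : ℕ) (q : Fin n → ℚ) (f : Fin n → (Fin 2 → ℚ)),
    (∀ i, 0 ≤ q i) ∧ (∀ i, f i ∈ G) ∧ x = ∑ i, q i • f i}

/-- The ray from the origin through `v ∈ ℚ²`. -/
def rayQ (v : Fin 2 → ℚ) : Set (Fin 2 → ℚ) := {x | ∃ q : ℚ, 0 ≤ q ∧ x = q • v}

/-- The lattice points on the ray from the origin through `v`. -/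
def rayN (v : Fin 2 → ℕ) : Set (Fin 2 → ℕ) := {x | toQ x ∈ rayQ (toQ v)}

/-- Square of the Euclidean norm of a lattice point. -/
def normSq (x : Fin 2 → ℕ) : ℕ := x 0 ^ 2 + x 1 ^ 2

/-- The cone `𝒞 = L_{ℚ≥}(S) ∩ ℕ²` of a subsemigroup `S ⊆ ℕ²`. -/
def coneN (S : Set (Fin 2 → ℕ)) : Set (Fin 2 → ℕ) := {x | toQ x ∈ coneQ (toQ '' S)}

/-- The interior `int(X)` of `X` relative to the extremal rays through `v1, v2`. -/
def interiorOf (X : Set (Fin 2 → ℕ)) (v1 v2 : Fin 2 → ℕ) : Set (Fin 2 → ℕ) :=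
  X \ (rayN v1 ∪ rayN v2)

/-- `S̄ = {a ∈ ℕ² : a + g ∈ S for every generator g ∈ G}`. -/
def sbar (S : Set (Fin 2 → ℕ)) (G : Finset (Fin 2 → ℕ)) : Set (Fin 2 → ℕ) :=
  {a | ∀ g ∈ G, a + g ∈ S}

/-- `n` is the nonzero element of minimal (Euclidean) norm of `T` on the ray `τ`. -/
def IsMinOnRay (T τ : Set (Fin 2 → ℕ)) (n : Fin 2 → ℕ) : Prop :=
  n ∈ T ∩ τ ∧ n ≠ 0 ∧ ∀ m ∈ T ∩ τ, m ≠ 0 → normSq n ≤ normSq m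

/-- The Cohen–Macaulay criterion for a simplicial semigroup `T ⊆ ℕ²` with cone `C`
and extremal rays `τ1, τ2`: for the minimal elements `n1, n2` of `T` on the two rays,
every `a ∈ C \ T` satisfies `a + n1 ∉ T` or `a + n2 ∉ T`. -/
def IsCMsg (T C τ1 τ2 : Set (Fin 2 → ℕ)) : Prop :=
  ∃ n1 n2 : Fin 2 → ℕ, IsMinOnRay T τ1 n1 ∧ IsMinOnRay T τ2 n2 ∧
    ∀ a ∈ C \ T, a + n1 ∉ T ∨ a + n2 ∉ T

/-- `S` is Buchsbaum iff (Rosales) the semigroup `S̄` is Cohen–Macaulay. -/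
def IsBuchsbaumSG (S : Set (Fin 2 → ℕ)) (G : Finset (Fin 2 → ℕ))
    (C τ1 τ2 : Set (Fin 2 → ℕ)) : Prop :=
  IsCMsg (sbar S G) C τ1 τ2

/-- A subsemigroup of `ℕ²` is generated by a single element. -/
def genByOne (T : Set (Fin 2 → ℕ)) : Prop :=
  ∃ n : Fin 2 → ℕ, T = {x | ∃ k : ℕ, x = k • n}

/-- The circle semigroup of the circle (disk) of center `(a,b)` and radius `r`. -/
def circleSG (a b r : ℝ) : Set (Fin 2 → ℕ) :=
  {x | ∃ i : ℕ, ((x 0 : ℝ) - i * a) ^ 2 + ((x 1 : ℝ) - i * b) ^ 2 ≤ (i * r) ^ 2}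

/-- The convex body semigroup `⋃ i, (i·F ∩ ℕ²)` of a convex body `F ⊆ ℚ²`. -/
def polySG (F : Set (Fin 2 → ℚ)) : Set (Fin 2 → ℕ) :=
  {x | ∃ i : ℕ, toQ x ∈ (i : ℚ) • F}

/-- `G` is a minimal generating set of the semigroup `S`. -/
def minimalGenSet (S : Set (Fin 2 → ℕ)) (G : Finset (Fin 2 → ℕ)) : Prop :=
  (AddSubmonoid.closure (G : Set (Fin 2 → ℕ)) : Set (Fin 2 → ℕ)) = S ∧
  ∀ g ∈ G, g ∉ (AddSubmonoid.closure ((G.erase g : Finset (Fin 2 → ℕ)) :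
    Set (Fin 2 → ℕ)) : Set (Fin 2 → ℕ))

/-- `S` is simplicial with extremal rays through `v1` and `v2`. -/
def Simplicial (S : Set (Fin 2 → ℕ)) (v1 v2 : Fin 2 → ℕ) : Prop :=
  v1 ≠ 0 ∧ v2 ≠ 0 ∧ rayN v1 ≠ rayN v2 ∧
  coneQ (toQ '' S) = coneQ {toQ v1, toQ v2}

/-!
Sufficiency holds for every simplicial semigroup: a point of `𝒞 \ 𝔖̄` lies on an extremal ray
`τ_j`, and adding the generator of `𝔖̄ ∩ τ_j` cannot bring it into `𝔖̄`.

Necessity rests on the finiteness of `int(𝒞) \ 𝔖`. If `a ∈ int(𝒞) \ 𝔖̄`, the Cohen–Macaulay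
criterion gives `a + n₁` or `a + n₂` in `int(𝒞) \ 𝔖̄`, of larger norm, so this finite set is empty.
Then `𝔖̄ ∩ τ₁ = ℕ n₁` by descent: if `x = y + n₁` with `y ∉ 𝔖̄`, then `y + n₂ ∈ int(𝒞) ⊆ 𝔖̄`
and `y + n₁ ∈ 𝔖̄`, against the criterion.

For the finiteness, `x ∈ C_i` iff `A i² - 2 ⟨x, c⟩ i + |x|² ≤ 0`, where `c = (a, b)` and
`A = |c|² - r²`. If `A < 0` every point qualifies for large `i`, if `A = 0` every point of the
open cone does. If `A > 0` a suitable `i` exists once the discriminant `⟨x, c⟩² - A |x|²` reaches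
`A² / 4`. In the coordinates along two semigroup elements spanning the rays, the discriminant is a
quadratic form with nonnegative diagonal and positive cross term, while the coordinates of an
interior lattice point are at least `1 / |det|`; hence only finitely many interior points are
missed.
-/

lemma toQ_add (x y : Fin 2 → ℕ) : toQ (x + y) = toQ x + toQ y := by
  ext i; simp [toQ]

lemma toQ_nsmul (k : ℕ) (x : Fin 2 → ℕ) : toQ (k • x) = (k : ℚ) • toQ x := by
  ext i; simp [toQ]

@[simp] lemma toQ_zero : toQ 0 = 0 := by
  ext i; simp [toQ]

lemma toQ_injective : Function.Injective toQ := fun x y h =>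
  funext fun i => by simpa [toQ] using congrFun h i

@[simp] lemma toQ_eq_zero {x : Fin 2 → ℕ} : toQ x = 0 ↔ x = 0 :=
  toQ_injective.eq_iff' toQ_zero

lemma apply_zero_add_apply_one_pos {x : Fin 2 → ℕ} (hx : x ≠ 0) : 0 < x 0 + x 1 := by
  by_contra! h
  refine hx (funext (Fin.forall_fin_two.mpr ⟨?_, ?_⟩)) <;> rw [Pi.zero_apply] <;> omega

lemma normSq_pos {x : Fin 2 → ℕ} (hx : x ≠ 0) : 0 < normSq x :=
  (apply_zero_add_apply_one_pos hx).trans_le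
    (add_le_add (Nat.le_self_pow two_ne_zero _) (Nat.le_self_pow two_ne_zero _))

lemma normSq_lt_normSq_add (x : Fin 2 → ℕ) {n : Fin 2 → ℕ} (hn : n ≠ 0) :
    normSq x < normSq (x + n) := by
  have := normSq_pos hn
  simp only [normSq, Pi.add_apply] at *
  nlinarith [Nat.zero_le (x 0 * n 0), Nat.zero_le (x 1 * n 1)]

lemma normSq_nsmul (k : ℕ) (x : Fin 2 → ℕ) : normSq (k • x) = k ^ 2 * normSq x := by
  simp only [normSq, Pi.smul_apply, smul_eq_mul]; ring

lemma normSq_cast_of_toQ_eq_smul {x v : Fin 2 → ℕ} {q : ℚ} (h : toQ x = q • toQ v) :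
    (normSq x : ℚ) = q ^ 2 * normSq v := by
  have h0 := congrFun h 0
  have h1 := congrFun h 1
  simp only [toQ, Pi.smul_apply, smul_eq_mul] at h0 h1
  simp only [normSq, Nat.cast_add, Nat.cast_pow, h0, h1]
  ring

lemma add_mem_rayN {v x y : Fin 2 → ℕ} (hx : x ∈ rayN v) (hy : y ∈ rayN v) :
    x + y ∈ rayN v := by
  obtain ⟨p, hp, hpx⟩ := hx
  obtain ⟨q, hq, hqy⟩ := hy
  exact ⟨p + q, add_nonneg hp hq, by rw [toQ_add, hpx, hqy, add_smul]⟩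

lemma nsmul_mem_rayN {v x : Fin 2 → ℕ} (hx : x ∈ rayN v) (k : ℕ) : k • x ∈ rayN v := by
  obtain ⟨q, hq, hqx⟩ := hx
  exact ⟨k * q, by positivity, by rw [toQ_nsmul, hqx, smul_smul]⟩

lemma rayN_eq_of_toQ_eq_smul {v w : Fin 2 → ℕ} {c : ℚ} (hc : 0 < c) (h : toQ w = c • toQ v) :
    rayN w = rayN v := by
  ext x
  constructor
  · rintro ⟨q, hq, hqx⟩
    exact ⟨q * c, by positivity, by rw [hqx, h, smul_smul]⟩
  · rintro ⟨q, hq, hqx⟩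
    refine ⟨q / c, by positivity, ?_⟩
    rw [hqx, h, smul_smul, div_mul_cancel₀ q hc.ne']

lemma exists_add_of_normSq_le {v x y : Fin 2 → ℕ} (hx : x ∈ rayN v) (hy : y ∈ rayN v)
    (h : normSq x ≤ normSq y) : ∃ z ∈ rayN v, y = z + x := by
  obtain ⟨p, hp, hpx⟩ := hx
  obtain ⟨q, hq, hqy⟩ := hy
  rcases eq_or_ne v 0 with rfl | hv
  · refine ⟨y, ⟨q, hq, hqy⟩, ?_⟩
    have hx0 : x = 0 := by simpa using hpx
    rw [hx0, add_zero]
  have hpq : p ≤ q := by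
    have hv' : (0 : ℚ) < normSq v := by exact_mod_cast normSq_pos hv
    have h' : (normSq x : ℚ) ≤ normSq y := by exact_mod_cast h
    rw [normSq_cast_of_toQ_eq_smul hpx, normSq_cast_of_toQ_eq_smul hqy] at h'
    exact (pow_le_pow_iff_left₀ hp hq two_ne_zero).mp (le_of_mul_le_mul_right h' hv')
  have hxy : x ≤ y := fun i => by
    have hx' := congrFun hpx i
    have hy' := congrFun hqy i
    simp only [toQ, Pi.smul_apply, smul_eq_mul] at hx' hy'
    have : (x i : ℚ) ≤ y i := by
      rw [hx', hy']
      exact mul_le_mul_of_nonneg_right hpq (Nat.cast_nonneg _)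
    exact_mod_cast this
  refine ⟨y - x, ⟨q - p, sub_nonneg.mpr hpq, ?_⟩, (tsub_add_cancel_of_le hxy).symm⟩
  rw [sub_smul, ← hpx, ← hqy, eq_sub_iff_add_eq, ← toQ_add, tsub_add_cancel_of_le hxy]

def det2 (x y : Fin 2 → ℚ) : ℚ := x 0 * y 1 - x 1 * y 0

lemma det2_swap (x y : Fin 2 → ℚ) : det2 y x = -det2 x y := by
  simp only [det2]; ring

lemma det2_self (x : Fin 2 → ℚ) : det2 x x = 0 := by
  simp only [det2]; ring

/-- The coefficient of `u` in the expansion of a vector in the basis `(u, w)`, by Cramer's rule. -/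
def coord (u w : Fin 2 → ℚ) : (Fin 2 → ℚ) →ₗ[ℚ] ℚ where
  toFun x := det2 x w / det2 u w
  map_add' x y := by simp only [det2, Pi.add_apply]; ring
  map_smul' c x := by simp only [det2, Pi.smul_apply, smul_eq_mul, RingHom.id_apply]; ring

lemma coord_apply (u w x : Fin 2 → ℚ) : coord u w x = det2 x w / det2 u w := rfl

lemma coord_self {u w : Fin 2 → ℚ} (hd : det2 u w ≠ 0) : coord u w u = 1 :=
  div_self hd

lemma coord_other (u w : Fin 2 → ℚ) : coord u w w = 0 := by
  rw [coord_apply, det2_self, zero_div]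

lemma eq_coord_smul_add {u w : Fin 2 → ℚ} (hd : det2 u w ≠ 0) (x : Fin 2 → ℚ) :
    x = coord u w x • u + coord w u x • w := by
  have hd' : det2 w u ≠ 0 := by rwa [det2_swap, neg_ne_zero]
  ext i
  simp only [Pi.add_apply, Pi.smul_apply, smul_eq_mul, coord_apply]
  field_simp
  simp only [det2]
  fin_cases i <;> simp <;> ring

lemma det2_smul_smul (p q : ℚ) (u w : Fin 2 → ℚ) : det2 (p • u) (q • w) = p * q * det2 u w := by
  simp only [det2, Pi.smul_apply, smul_eq_mul]; ring

lemma coord_smul_smul {u w : Fin 2 → ℚ} {p q : ℚ} (hq : q ≠ 0) (x : Fin 2 → ℚ) :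
    coord (p • u) (q • w) x = p⁻¹ * coord u w x := by
  simp only [coord_apply, det2, Pi.smul_apply, smul_eq_mul]
  field_simp

lemma subset_coneQ (T : Set (Fin 2 → ℚ)) : T ⊆ coneQ T := fun t ht =>
  ⟨1, fun _ => 1, fun _ => t, fun _ => zero_le_one, fun _ => ht, by simp⟩

lemma nonneg_of_mem_coneQ {T : Set (Fin 2 → ℚ)} {ℓ : (Fin 2 → ℚ) →ₗ[ℚ] ℚ}
    (hℓ : ∀ t ∈ T, 0 ≤ ℓ t) {x : Fin 2 → ℚ} (hx : x ∈ coneQ T) : 0 ≤ ℓ x := by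
  obtain ⟨n, q, f, hq, hf, rfl⟩ := hx
  rw [map_sum]
  exact Finset.sum_nonneg fun i _ => by
    rw [map_smul, smul_eq_mul]
    exact mul_nonneg (hq i) (hℓ _ (hf i))

/-- A face of a cone is spanned by the generators it contains. -/
lemma exists_ne_zero_of_mem_coneQ {T : Set (Fin 2 → ℚ)} {ℓ : (Fin 2 → ℚ) →ₗ[ℚ] ℚ}
    (hℓ : ∀ t ∈ T, 0 ≤ ℓ t) {x : Fin 2 → ℚ} (hx : x ∈ coneQ T) (hx0 : x ≠ 0) (hℓx : ℓ x = 0) :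
    ∃ t ∈ T, t ≠ 0 ∧ ℓ t = 0 := by
  obtain ⟨n, q, f, hq, hf, rfl⟩ := hx
  obtain ⟨i, -, hi⟩ := Finset.exists_ne_zero_of_sum_ne_zero hx0
  have hterm : q i * ℓ (f i) = 0 := by
    simp only [map_sum, map_smul, smul_eq_mul] at hℓx
    exact (Finset.sum_eq_zero_iff_of_nonneg fun j _ => mul_nonneg (hq j) (hℓ _ (hf j))).mp hℓx i
      (Finset.mem_univ i)
  obtain ⟨hqi, hfi⟩ := smul_ne_zero_iff.mp hi
  exact ⟨f i, hf i, hfi, (mul_eq_zero.mp hterm).resolve_left hqi⟩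

lemma mem_coneQ_pair_iff {u w : Fin 2 → ℚ} (hd : det2 u w ≠ 0) {x : Fin 2 → ℚ} :
    x ∈ coneQ {u, w} ↔ 0 ≤ coord u w x ∧ 0 ≤ coord w u x := by
  have hd' : det2 w u ≠ 0 := by rwa [det2_swap, neg_ne_zero]
  constructor
  · intro hx
    refine ⟨nonneg_of_mem_coneQ ?_ hx, nonneg_of_mem_coneQ ?_ hx⟩ <;>
      rintro t (rfl | rfl) <;> simp [coord_self, coord_other, hd, hd']
  · rintro ⟨hα, hβ⟩
    refine ⟨2, ![coord u w x, coord w u x], ![u, w], ?_, ?_, ?_⟩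
    · intro i; fin_cases i <;> assumption
    · intro i; fin_cases i <;> simp
    · simpa [Fin.sum_univ_two] using eq_coord_smul_add hd x

lemma coneQ_pair_smul {u w : Fin 2 → ℚ} (hd : det2 u w ≠ 0) {p q : ℚ} (hp : 0 < p) (hq : 0 < q) :
    coneQ {p • u, q • w} = coneQ {u, w} := by
  have hd' : det2 (p • u) (q • w) ≠ 0 := by
    rw [det2_smul_smul]; positivity
  ext x
  rw [mem_coneQ_pair_iff hd, mem_coneQ_pair_iff hd', coord_smul_smul hq.ne', coord_smul_smul hp.ne']
  simp [hp, hq]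

def coordN (v w x : Fin 2 → ℕ) : ℚ := coord (toQ v) (toQ w) (toQ x)

lemma coordN_add (v w x y : Fin 2 → ℕ) : coordN v w (x + y) = coordN v w x + coordN v w y := by
  simp only [coordN, toQ_add, map_add]

lemma toQ_eq_coordN {v w : Fin 2 → ℕ} (hd : det2 (toQ v) (toQ w) ≠ 0) (x : Fin 2 → ℕ) :
    toQ x = coordN v w x • toQ v + coordN w v x • toQ w :=
  eq_coord_smul_add hd (toQ x)

lemma eq_zero_of_coordN_eq_zero {v w x : Fin 2 → ℕ} (hd : det2 (toQ v) (toQ w) ≠ 0)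
    (h1 : coordN v w x = 0) (h2 : coordN w v x = 0) : x = 0 := by
  simpa [h1, h2] using toQ_eq_coordN hd x

lemma mem_rayN_iff_coordN {v w x : Fin 2 → ℕ} (hd : det2 (toQ v) (toQ w) ≠ 0) :
    x ∈ rayN v ↔ coordN w v x = 0 ∧ 0 ≤ coordN v w x := by
  constructor
  · rintro ⟨q, hq, hqx⟩
    simp [coordN, hqx, coord_self hd, coord_other, hq]
  · rintro ⟨h2, h1⟩
    exact ⟨_, h1, by simpa [h2] using toQ_eq_coordN hd x⟩

lemma det2_toQ_ne_zero {v w : Fin 2 → ℕ} (hv : v ≠ 0) (hw : w ≠ 0) (h : rayN v ≠ rayN w) :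
    det2 (toQ v) (toQ w) ≠ 0 := by
  intro hd
  have hv' : (0 : ℚ) < v 0 + v 1 := by exact_mod_cast apply_zero_add_apply_one_pos hv
  have hw' : (0 : ℚ) < w 0 + w 1 := by exact_mod_cast apply_zero_add_apply_one_pos hw
  simp only [det2, toQ] at hd
  refine h (rayN_eq_of_toQ_eq_smul (c := (w 0 + w 1) / (v 0 + v 1)) (by positivity) ?_).symm
  rw [funext_iff, Fin.forall_fin_two]
  constructor <;>
  · simp only [toQ, Pi.smul_apply, smul_eq_mul]
    field_simp
    linarith

lemma det2_toQ (x y : Fin 2 → ℕ) :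
    det2 (toQ x) (toQ y) = ((x 0 * y 1 - x 1 * y 0 : ℤ) : ℚ) := by
  simp [det2, toQ]

lemma left_ne_zero_of_det2_ne_zero {v w : Fin 2 → ℕ} (hd : det2 (toQ v) (toQ w) ≠ 0) : v ≠ 0 := by
  rintro rfl
  simp [det2] at hd

lemma right_ne_zero_of_det2_ne_zero {v w : Fin 2 → ℕ} (hd : det2 (toQ v) (toQ w) ≠ 0) : w ≠ 0 :=
  left_ne_zero_of_det2_ne_zero (by rwa [det2_swap, neg_ne_zero])

lemma inv_abs_det2_le_coordN {v w x : Fin 2 → ℕ} (h : 0 < coordN v w x) :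
    |det2 (toQ v) (toQ w)|⁻¹ ≤ coordN v w x := by
  rw [coordN, coord_apply, det2_toQ x] at *
  set n : ℤ := x 0 * w 1 - x 1 * w 0
  have hn : (1 : ℚ) ≤ |(n : ℚ)| := by
    exact_mod_cast Int.one_le_abs fun h0 => by simp [h0] at h
  calc |det2 (toQ v) (toQ w)|⁻¹ ≤ |(n : ℚ)| / |det2 (toQ v) (toQ w)| := by
        rw [inv_eq_one_div]; gcongr
    _ = (n : ℚ) / det2 (toQ v) (toQ w) := by rw [← abs_div, abs_of_pos h]

lemma natCast_eq_coordN {v w : Fin 2 → ℕ} (hd : det2 (toQ v) (toQ w) ≠ 0) (x : Fin 2 → ℕ)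
    (i : Fin 2) : (x i : ℝ) = (coordN v w x : ℝ) * v i + (coordN w v x : ℝ) * w i := by
  have h := congrFun (toQ_eq_coordN hd x) i
  simp only [toQ, Pi.add_apply, Pi.smul_apply, smul_eq_mul] at h
  exact_mod_cast h

lemma Set.Finite.eq_empty_of_forall_exists_lt {α β : Type*} [Preorder β] {E : Set α}
    (hE : E.Finite) (f : α → β) (h : ∀ x ∈ E, ∃ y ∈ E, f x < f y) : E = ∅ := by
  by_contra hne
  obtain ⟨x, hx, hmax⟩ := hE.exists_maximalFor f E (Set.nonempty_iff_ne_empty.mpr hne)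
  obtain ⟨y, hy, hlt⟩ := h x hx
  exact (hmax hy hlt.le).not_gt hlt

lemma interiorOf_comm (X : Set (Fin 2 → ℕ)) (v1 v2 : Fin 2 → ℕ) :
    interiorOf X v1 v2 = interiorOf X v2 v1 := by
  rw [interiorOf, interiorOf, Set.union_comm]

lemma isMinOnRay_of_inter_eq {T τ : Set (Fin 2 → ℕ)} {m : Fin 2 → ℕ}
    (h : T ∩ τ = {x | ∃ k : ℕ, x = k • m}) (hm : m ≠ 0) : IsMinOnRay T τ m := by
  refine ⟨h ▸ ⟨1, (one_nsmul m).symm⟩, hm, fun x hx hx0 => ?_⟩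
  obtain ⟨k, rfl⟩ : x ∈ {x | ∃ k : ℕ, x = k • m} := h ▸ hx
  have hk : k ≠ 0 := by rintro rfl; exact hx0 (zero_nsmul m)
  rw [normSq_nsmul]
  exact Nat.le_mul_of_pos_left _ (pow_pos (Nat.pos_of_ne_zero hk) 2)

lemma add_notMem_of_inter_eq {T : Set (Fin 2 → ℕ)} {v m x : Fin 2 → ℕ}
    (h : T ∩ rayN v = {x | ∃ k : ℕ, x = k • m}) (hm : m ≠ 0) (hx : x ∈ rayN v) (hxT : x ∉ T) :
    x + m ∉ T := by
  intro hxm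
  have hm' : m ∈ T ∩ rayN v := h ▸ ⟨1, (one_nsmul m).symm⟩
  obtain ⟨k, hk⟩ : x + m ∈ {x | ∃ k : ℕ, x = k • m} := h ▸ ⟨hxm, add_mem_rayN hx hm'.2⟩
  cases k with
  | zero => exact hm (add_eq_zero.mp (hk.trans (zero_nsmul m))).2
  | succ j =>
    rw [succ_nsmul] at hk
    have hx' : x ∈ T ∩ rayN v := h ▸ ⟨j, add_right_cancel hk⟩
    exact hxT hx'.1

section SimplicialSemigroup

variable {S : Set (Fin 2 → ℕ)} {G : Finset (Fin 2 → ℕ)} {v1 v2 : Fin 2 → ℕ}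

lemma minimalGenSet.zero_mem (hG : minimalGenSet S G) : (0 : Fin 2 → ℕ) ∈ S :=
  hG.1 ▸ AddSubmonoid.zero_mem _

lemma minimalGenSet.add_mem (hG : minimalGenSet S G) {x y : Fin 2 → ℕ} (hx : x ∈ S) (hy : y ∈ S) :
    x + y ∈ S := by
  rw [← hG.1] at *
  exact AddSubmonoid.add_mem _ hx hy

lemma minimalGenSet.mem_of_mem (hG : minimalGenSet S G) {g : Fin 2 → ℕ} (hg : g ∈ G) : g ∈ S :=
  hG.1 ▸ AddSubmonoid.subset_closure hg

lemma minimalGenSet.ne_zero (hG : minimalGenSet S G) {g : Fin 2 → ℕ} (hg : g ∈ G) : g ≠ 0 := by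
  rintro rfl
  exact hG.2 0 hg (AddSubmonoid.zero_mem _)

lemma minimalGenSet.exists_add_of_mem (hG : minimalGenSet S G) {x : Fin 2 → ℕ} (hx : x ∈ S)
    (hx0 : x ≠ 0) : ∃ g ∈ G, ∃ s ∈ S, x = g + s := by
  rw [← hG.1] at hx
  induction hx using AddSubmonoid.closure_induction with
  | mem g hg => exact ⟨g, hg, 0, hG.zero_mem, (add_zero g).symm⟩
  | zero => exact absurd rfl hx0
  | add x y hx hy ihx ihy =>
    rcases eq_or_ne x 0 with rfl | hx0'
    · simp_all
    obtain ⟨g, hg, s, hs, rfl⟩ := ihx hx0'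
    exact ⟨g, hg, s + y, hG.add_mem hs (hG.1 ▸ hy), add_assoc g s y⟩

lemma subset_sbar (hG : minimalGenSet S G) : S ⊆ sbar S G :=
  fun _ hs _ hg => hG.add_mem hs (hG.mem_of_mem hg)

lemma add_mem_of_mem_sbar (hG : minimalGenSet S G) {x s : Fin 2 → ℕ} (hx : x ∈ sbar S G)
    (hs : s ∈ S) (hs0 : s ≠ 0) : x + s ∈ S := by
  obtain ⟨g, hg, s', hs', rfl⟩ := hG.exists_add_of_mem hs hs0
  rw [← add_assoc]
  exact hG.add_mem (hx g hg) hs'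

lemma add_mem_sbar (hG : minimalGenSet S G) {x y : Fin 2 → ℕ} (hx : x ∈ sbar S G)
    (hy : y ∈ sbar S G) : x + y ∈ sbar S G := fun g hg => by
  rw [add_assoc]
  refine add_mem_of_mem_sbar hG hx (hy g hg) fun h => hG.ne_zero hg ?_
  exact (add_eq_zero.mp h).2

lemma nsmul_mem_sbar (hG : minimalGenSet S G) {x : Fin 2 → ℕ} (hx : x ∈ sbar S G) (k : ℕ) :
    k • x ∈ sbar S G := by
  induction k with
  | zero => simpa using subset_sbar hG hG.zero_mem
  | succ k ih => exact succ_nsmul x k ▸ add_mem_sbar hG ih hx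

lemma Simplicial.det2_ne_zero (hs : Simplicial S v1 v2) : det2 (toQ v1) (toQ v2) ≠ 0 :=
  det2_toQ_ne_zero hs.1 hs.2.1 hs.2.2.1

lemma Simplicial.symm (hs : Simplicial S v1 v2) : Simplicial S v2 v1 :=
  ⟨hs.2.1, hs.1, hs.2.2.1.symm, by rw [hs.2.2.2, Set.pair_comm]⟩

lemma Simplicial.mem_coneN_iff (hs : Simplicial S v1 v2) {x : Fin 2 → ℕ} :
    x ∈ coneN S ↔ 0 ≤ coordN v1 v2 x ∧ 0 ≤ coordN v2 v1 x := by
  rw [coneN, Set.mem_ofPred_eq, hs.2.2.2, mem_coneQ_pair_iff hs.det2_ne_zero]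
  rfl

lemma Simplicial.mem_interiorOf_iff (hs : Simplicial S v1 v2) {x : Fin 2 → ℕ} :
    x ∈ interiorOf (coneN S) v1 v2 ↔ 0 < coordN v1 v2 x ∧ 0 < coordN v2 v1 x := by
  rw [interiorOf, Set.mem_sdiff, Set.mem_union, hs.mem_coneN_iff,
    mem_rayN_iff_coordN hs.det2_ne_zero, mem_rayN_iff_coordN hs.symm.det2_ne_zero,
    lt_iff_le_and_ne, lt_iff_le_and_ne]
  tauto

lemma Simplicial.add_mem_interiorOf (hs : Simplicial S v1 v2) {x y : Fin 2 → ℕ}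
    (hx : x ∈ interiorOf (coneN S) v1 v2) (hy : y ∈ coneN S) :
    x + y ∈ interiorOf (coneN S) v1 v2 := by
  rw [hs.mem_interiorOf_iff, coordN_add, coordN_add] at *
  rw [hs.mem_coneN_iff] at hy
  exact ⟨add_pos_of_pos_of_nonneg hx.1 hy.1, add_pos_of_pos_of_nonneg hx.2 hy.2⟩

lemma Simplicial.coordN_pos_of_mem_rayN (hs : Simplicial S v1 v2) {x : Fin 2 → ℕ}
    (hx : x ∈ rayN v1) (hx0 : x ≠ 0) : 0 < coordN v1 v2 x := by
  rw [mem_rayN_iff_coordN hs.det2_ne_zero] at hx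
  exact hx.2.lt_of_ne fun h => hx0 (eq_zero_of_coordN_eq_zero hs.det2_ne_zero h.symm hx.1)

lemma Simplicial.add_mem_interiorOf_of_mem_rayN (hs : Simplicial S v1 v2) {x y : Fin 2 → ℕ}
    (hx : x ∈ rayN v1) (hx0 : x ≠ 0) (hy : y ∈ rayN v2) (hy0 : y ≠ 0) :
    x + y ∈ interiorOf (coneN S) v1 v2 := by
  rw [hs.mem_interiorOf_iff, coordN_add, coordN_add,
    ((mem_rayN_iff_coordN hs.det2_ne_zero).mp hx).1,
    ((mem_rayN_iff_coordN hs.symm.det2_ne_zero).mp hy).1, add_zero, zero_add]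
  exact ⟨hs.coordN_pos_of_mem_rayN hx hx0, hs.symm.coordN_pos_of_mem_rayN hy hy0⟩

lemma Simplicial.exists_mem_rayN (hs : Simplicial S v1 v2) : ∃ s ∈ S, s ∈ rayN v1 ∧ s ≠ 0 := by
  have hd := hs.det2_ne_zero
  have hv1 : toQ v1 ∈ coneQ (toQ '' S) := by
    rw [hs.2.2.2, mem_coneQ_pair_iff hd, coord_self hd, coord_other]
    exact ⟨zero_le_one, le_rfl⟩
  obtain ⟨_, ⟨s, hs', rfl⟩, hs0, hs2⟩ := exists_ne_zero_of_mem_coneQ (ℓ := coord (toQ v2) (toQ v1))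
    (by rintro _ ⟨s, hs', rfl⟩; exact (hs.mem_coneN_iff.mp (subset_coneQ _ ⟨s, hs', rfl⟩)).2)
    hv1 (by simpa using hs.1) (coord_other _ _)
  refine ⟨s, hs', (mem_rayN_iff_coordN hd).mpr ⟨hs2, ?_⟩, by simpa using hs0⟩
  exact (hs.mem_coneN_iff.mp (subset_coneQ _ ⟨s, hs', rfl⟩)).1

lemma Simplicial.exists_simplicial_mem (hs : Simplicial S v1 v2) :
    ∃ s1 ∈ S, ∃ s2 ∈ S, Simplicial S s1 s2 ∧ rayN s1 = rayN v1 ∧ rayN s2 = rayN v2 := by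
  obtain ⟨s1, hs1, ⟨p, hp, hps⟩, hs10⟩ := hs.exists_mem_rayN
  obtain ⟨s2, hs2, ⟨q, hq, hqs⟩, hs20⟩ := hs.symm.exists_mem_rayN
  have hp' : 0 < p := hp.lt_of_ne (by rintro rfl; simp_all)
  have hq' : 0 < q := hq.lt_of_ne (by rintro rfl; simp_all)
  have h1 := rayN_eq_of_toQ_eq_smul hp' hps
  have h2 := rayN_eq_of_toQ_eq_smul hq' hqs
  refine ⟨s1, hs1, s2, hs2, ⟨hs10, hs20, h1 ▸ h2 ▸ hs.2.2.1, ?_⟩, h1, h2⟩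
  rw [hps, hqs, coneQ_pair_smul hs.det2_ne_zero hp' hq', hs.2.2.2]

lemma Simplicial.coordN_nonneg_of_mem_sbar (hG : minimalGenSet S G) (hs : Simplicial S v1 v2)
    {x : Fin 2 → ℕ} (hx : x ∈ sbar S G) : 0 ≤ coordN v2 v1 x := by
  obtain ⟨s, hsS, hs1, hs0⟩ := hs.exists_mem_rayN
  have h := (hs.mem_coneN_iff.mp (subset_coneQ _ ⟨_, add_mem_of_mem_sbar hG hx hsS hs0, rfl⟩)).2
  rwa [coordN_add, ((mem_rayN_iff_coordN hs.det2_ne_zero).mp hs1).1, add_zero] at h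

lemma Simplicial.sbar_subset_coneN (hG : minimalGenSet S G) (hs : Simplicial S v1 v2) :
    sbar S G ⊆ coneN S := fun _ hx =>
  hs.mem_coneN_iff.mpr
    ⟨hs.symm.coordN_nonneg_of_mem_sbar hG hx, hs.coordN_nonneg_of_mem_sbar hG hx⟩

lemma Simplicial.rayN_subset_coneN (hs : Simplicial S v1 v2) : rayN v1 ⊆ coneN S := fun x hx => by
  rw [mem_rayN_iff_coordN hs.det2_ne_zero] at hx
  exact hs.mem_coneN_iff.mpr ⟨hx.2, hx.1.ge⟩

lemma Simplicial.interiorOf_subset_sbar (hG : minimalGenSet S G) (hs : Simplicial S v1 v2)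
    (hfin : (interiorOf (coneN S) v1 v2 \ S).Finite) {n1 n2 : Fin 2 → ℕ}
    (hn1 : n1 ∈ sbar S G) (hn10 : n1 ≠ 0) (hn2 : n2 ∈ sbar S G) (hn20 : n2 ≠ 0)
    (hcrit : ∀ a ∈ coneN S \ sbar S G, a + n1 ∉ sbar S G ∨ a + n2 ∉ sbar S G) :
    interiorOf (coneN S) v1 v2 ⊆ sbar S G := by
  have hE : (interiorOf (coneN S) v1 v2 \ sbar S G).Finite :=
    hfin.subset (Set.sdiff_subset_sdiff_right (subset_sbar hG))
  refine Set.sdiff_eq_empty.mp (hE.eq_empty_of_forall_exists_lt normSq ?_)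
  rintro x ⟨hx, hxs⟩
  have hadd {n : Fin 2 → ℕ} (hn : n ∈ sbar S G) : x + n ∈ interiorOf (coneN S) v1 v2 :=
    hs.add_mem_interiorOf hx (hs.sbar_subset_coneN hG hn)
  rcases hcrit x ⟨hx.1, hxs⟩ with h | h
  · exact ⟨x + n1, ⟨hadd hn1, h⟩, normSq_lt_normSq_add x hn10⟩
  · exact ⟨x + n2, ⟨hadd hn2, h⟩, normSq_lt_normSq_add x hn20⟩

lemma Simplicial.sbar_inter_rayN_eq (hG : minimalGenSet S G) (hs : Simplicial S v1 v2)
    (hint : interiorOf (coneN S) v1 v2 ⊆ sbar S G) {n1 n2 : Fin 2 → ℕ}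
    (hn1 : IsMinOnRay (sbar S G) (rayN v1) n1) (hn2 : n2 ∈ rayN v2) (hn20 : n2 ≠ 0)
    (hcrit : ∀ a ∈ coneN S \ sbar S G, a + n1 ∉ sbar S G ∨ a + n2 ∉ sbar S G) :
    sbar S G ∩ rayN v1 = {x | ∃ k : ℕ, x = k • n1} := by
  obtain ⟨⟨hn1s, hn1r⟩, hn10, hn1min⟩ := hn1
  refine Set.Subset.antisymm (fun x hx => ?_) ?_
  · induction hN : normSq x using Nat.strong_induction_on generalizing x with
    | _ N ih =>
    rcases eq_or_ne x 0 with rfl | hx0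
    · exact ⟨0, (zero_nsmul n1).symm⟩
    obtain ⟨y, hy, rfl⟩ := exists_add_of_normSq_le hn1r hx.2 (hn1min x hx hx0)
    by_cases hys : y ∈ sbar S G
    · obtain ⟨k, rfl⟩ := ih _ (hN ▸ normSq_lt_normSq_add y hn10) y ⟨hys, hy⟩ rfl
      exact ⟨k + 1, (succ_nsmul n1 k).symm⟩
    have hy0 : y ≠ 0 := by
      rintro rfl
      exact hys (subset_sbar hG hG.zero_mem)
    rcases hcrit y ⟨hs.rayN_subset_coneN hy, hys⟩ with h | h
    · exact (h hx.1).elim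
    · exact (h (hint (hs.add_mem_interiorOf_of_mem_rayN hy hy0 hn2 hn20))).elim
  · rintro _ ⟨k, rfl⟩
    exact ⟨nsmul_mem_sbar hG hn1s k, nsmul_mem_rayN hn1r k⟩

lemma Simplicial.ne_zero_of_sbar_inter_rayN_eq (hG : minimalGenSet S G) (hs : Simplicial S v1 v2)
    {m : Fin 2 → ℕ} (h : sbar S G ∩ rayN v1 = {x | ∃ k : ℕ, x = k • m}) : m ≠ 0 := by
  rintro rfl
  obtain ⟨s, hsS, hs1, hs0⟩ := hs.exists_mem_rayN
  obtain ⟨k, rfl⟩ : s ∈ {x | ∃ k : ℕ, x = k • (0 : Fin 2 → ℕ)} := h ▸ ⟨subset_sbar hG hsS, hs1⟩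
  exact hs0 (smul_zero k)

lemma Simplicial.isCMsg_sbar (hG : minimalGenSet S G) (hs : Simplicial S v1 v2)
    (hint : interiorOf (coneN S) v1 v2 = interiorOf (sbar S G) v1 v2)
    (h1 : genByOne (sbar S G ∩ rayN v1)) (h2 : genByOne (sbar S G ∩ rayN v2)) :
    IsCMsg (sbar S G) (coneN S) (rayN v1) (rayN v2) := by
  obtain ⟨m1, hm1⟩ := h1
  obtain ⟨m2, hm2⟩ := h2
  have hm10 := hs.ne_zero_of_sbar_inter_rayN_eq hG hm1
  have hm20 := hs.symm.ne_zero_of_sbar_inter_rayN_eq hG hm2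
  refine ⟨m1, m2, isMinOnRay_of_inter_eq hm1 hm10, isMinOnRay_of_inter_eq hm2 hm20, ?_⟩
  rintro x ⟨hxC, hxs⟩
  have hx : x ∈ rayN v1 ∪ rayN v2 := by
    by_contra hx
    have hx' : x ∈ interiorOf (sbar S G) v1 v2 := hint ▸ ⟨hxC, hx⟩
    exact hxs hx'.1
  rcases hx with hx | hx
  · exact Or.inl (add_notMem_of_inter_eq hm1 hm10 hx hxs)
  · exact Or.inr (add_notMem_of_inter_eq hm2 hm20 hx hxs)

theorem Simplicial.isBuchsbaumSG_iff (hG : minimalGenSet S G) (hs : Simplicial S v1 v2)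
    (hfin : (interiorOf (coneN S) v1 v2 \ S).Finite) :
    IsBuchsbaumSG S G (coneN S) (rayN v1) (rayN v2) ↔
      (interiorOf (coneN S) v1 v2 = interiorOf (sbar S G) v1 v2 ∧
        genByOne (sbar S G ∩ rayN v1) ∧ genByOne (sbar S G ∩ rayN v2)) := by
  constructor
  · rintro ⟨n1, n2, hn1, hn2, hcrit⟩
    have hint := hs.interiorOf_subset_sbar hG hfin hn1.1.1 hn1.2.1 hn2.1.1 hn2.2.1 hcrit
    refine ⟨Set.Subset.antisymm (fun x hx => ⟨hint hx, hx.2⟩)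
        (fun x hx => ⟨hs.sbar_subset_coneN hG hx.1, hx.2⟩),
      ⟨n1, hs.sbar_inter_rayN_eq hG hint hn1 hn2.1.2 hn2.2.1 hcrit⟩,
      ⟨n2, hs.symm.sbar_inter_rayN_eq hG (interiorOf_comm _ v1 v2 ▸ hint) hn2 hn1.1.2 hn1.2.1
        fun a ha => (hcrit a ha).symm⟩⟩
  · rintro ⟨hint, h1, h2⟩
    exact hs.isCMsg_sbar hG hint h1 h2

end SimplicialSemigroup

lemma exists_nat_quadratic_nonpos_of_neg {A : ℝ} (hA : A < 0) (B N : ℝ) :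
    ∃ i : ℕ, A * i ^ 2 - 2 * B * i + N ≤ 0 := by
  obtain ⟨n, hn⟩ := exists_nat_ge ((2 * |B| + |N|) / -A)
  rw [div_le_iff₀ (neg_pos.mpr hA)] at hn
  refine ⟨n + 1, ?_⟩
  push_cast
  have hn0 : (0 : ℝ) ≤ n := n.cast_nonneg
  nlinarith [le_abs_self B, neg_abs_le B, le_abs_self N, abs_nonneg N,
    mul_nonneg hn0 (abs_nonneg N)]

lemma exists_nat_quadratic_nonpos_of_nonpos {A B : ℝ} (hA : A ≤ 0) (hB : 0 < B) (N : ℝ) :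
    ∃ i : ℕ, A * i ^ 2 - 2 * B * i + N ≤ 0 := by
  obtain ⟨n, hn⟩ := exists_nat_ge (N / (2 * B))
  rw [div_le_iff₀ (by positivity)] at hn
  exact ⟨n, by nlinarith [mul_nonpos_of_nonpos_of_nonneg hA (sq_nonneg (n : ℝ))]⟩

/-- The roots `(B ± √(B² - A N)) / A` are at distance at least `1 / 2` from `B / A`, so the
natural number nearest to `B / A` lies between them. -/
lemma exists_nat_quadratic_nonpos_of_pos {A B N : ℝ} (hA : 0 < A) (hB : 0 ≤ B)
    (h : A ^ 2 / 4 ≤ B ^ 2 - A * N) : ∃ i : ℕ, A * i ^ 2 - 2 * B * i + N ≤ 0 := by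
  have hBA : 0 ≤ B / A + 1 / 2 := by positivity
  refine ⟨⌊B / A + 1 / 2⌋₊, ?_⟩
  have h1 := Nat.floor_le hBA
  have h2 := Nat.lt_floor_add_one (B / A + 1 / 2)
  set i : ℝ := (⌊B / A + 1 / 2⌋₊ : ℝ)
  have e : A * (B / A) = B := mul_div_cancel₀ B hA.ne'
  have h1' : A * i - B ≤ A / 2 := by nlinarith [mul_le_mul_of_nonneg_left h1 hA.le]
  have h2' : -(A / 2) < A * i - B := by nlinarith [mul_lt_mul_of_pos_left h2 hA]
  have hsq : (A * i - B) ^ 2 ≤ A ^ 2 / 4 := by nlinarith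
  nlinarith

lemma sq_sub_mul_nonneg_of_quadratic_nonpos {A B N t : ℝ} (hA : 0 < A)
    (h : A * t ^ 2 - 2 * B * t + N ≤ 0) : 0 ≤ B ^ 2 - A * N := by
  nlinarith [sq_nonneg (A * t - B)]

lemma pos_of_quadratic_nonpos {A B N t : ℝ} (hA : 0 ≤ A) (ht : 0 ≤ t) (hN : 0 < N)
    (h : A * t ^ 2 - 2 * B * t + N ≤ 0) : 0 < B := by
  by_contra! hB
  nlinarith [mul_nonneg hA (sq_nonneg t), mul_nonpos_of_nonpos_of_nonneg hB ht]

lemma mul_le_mul_of_sq_le_mul {A B₁ B₂ N₁ N₂ d : ℝ} (hA : 0 ≤ A) (hB₁ : 0 ≤ B₁) (hB₂ : 0 ≤ B₂)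
    (hN₂ : 0 ≤ N₂) (hd : 0 ≤ d) (h₁ : A * N₁ ≤ B₁ ^ 2) (h₂ : A * N₂ ≤ B₂ ^ 2)
    (hcs : d ^ 2 ≤ N₁ * N₂) : A * d ≤ B₁ * B₂ := by
  have k₁ : (A * d) ^ 2 ≤ (A * N₁) * (A * N₂) := by
    nlinarith [mul_le_mul_of_nonneg_left hcs (sq_nonneg A)]
  have k₂ : (A * N₁) * (A * N₂) ≤ B₁ ^ 2 * B₂ ^ 2 :=
    mul_le_mul h₁ h₂ (by positivity) (by positivity)
  exact (pow_le_pow_iff_left₀ (by positivity) (by positivity) two_ne_zero).mp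
    (by rw [mul_pow]; linarith)

def circleLin (a b : ℝ) (x : Fin 2 → ℕ) : ℝ := a * x 0 + b * x 1

/-- A quarter of the discriminant of `t ↦ |x - t (a, b)|² - (t r)²`. -/
def circleDisc (a b r : ℝ) (x : Fin 2 → ℕ) : ℝ :=
  circleLin a b x ^ 2 - (a ^ 2 + b ^ 2 - r ^ 2) * normSq x

def circlePolar (a b r : ℝ) (x y : Fin 2 → ℕ) : ℝ :=
  circleLin a b x * circleLin a b y - (a ^ 2 + b ^ 2 - r ^ 2) * (x 0 * y 0 + x 1 * y 1 : ℕ)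

section CircleSG

variable {a b r : ℝ}

lemma mem_circleSG_iff (x : Fin 2 → ℕ) : x ∈ circleSG a b r ↔
    ∃ i : ℕ, (a ^ 2 + b ^ 2 - r ^ 2) * i ^ 2 - 2 * circleLin a b x * i + normSq x ≤ 0 := by
  simp only [circleSG, circleLin, normSq, Set.mem_ofPred_eq]
  push_cast
  constructor <;> rintro ⟨i, hi⟩ <;> exact ⟨i, by linarith⟩

lemma circleLin_eq_of_coord {x s1 s2 : Fin 2 → ℕ} {α β : ℝ}
    (hx : ∀ i, (x i : ℝ) = α * s1 i + β * s2 i) :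
    circleLin a b x = α * circleLin a b s1 + β * circleLin a b s2 := by
  simp only [circleLin, hx]; ring

lemma circleDisc_eq_of_coord {x s1 s2 : Fin 2 → ℕ} {α β : ℝ}
    (hx : ∀ i, (x i : ℝ) = α * s1 i + β * s2 i) :
    circleDisc a b r x = α ^ 2 * circleDisc a b r s1 + 2 * α * β * circlePolar a b r s1 s2 +
      β ^ 2 * circleDisc a b r s2 := by
  simp only [circleDisc, circlePolar, circleLin, normSq]
  push_cast
  simp only [hx]; ring

lemma circleSG_eq_univ (hA : a ^ 2 + b ^ 2 - r ^ 2 < 0) : circleSG a b r = Set.univ :=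
  Set.eq_univ_of_forall fun x =>
    (mem_circleSG_iff x).mpr (exists_nat_quadratic_nonpos_of_neg hA _ _)

lemma circleLin_pos_of_mem (hA : 0 ≤ a ^ 2 + b ^ 2 - r ^ 2) {s : Fin 2 → ℕ}
    (hs : s ∈ circleSG a b r) (hs0 : s ≠ 0) : 0 < circleLin a b s := by
  obtain ⟨i, hi⟩ := (mem_circleSG_iff s).mp hs
  exact pos_of_quadratic_nonpos hA i.cast_nonneg (by exact_mod_cast normSq_pos hs0) hi

lemma circleDisc_nonneg_of_mem (hA : 0 < a ^ 2 + b ^ 2 - r ^ 2) {s : Fin 2 → ℕ}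
    (hs : s ∈ circleSG a b r) : 0 ≤ circleDisc a b r s := by
  obtain ⟨i, hi⟩ := (mem_circleSG_iff s).mp hs
  exact sq_sub_mul_nonneg_of_quadratic_nonpos hA hi

lemma circlePolar_pos (hA : 0 < a ^ 2 + b ^ 2 - r ^ 2) (hr : r ≠ 0) {s1 s2 : Fin 2 → ℕ}
    (h1 : s1 ∈ circleSG a b r) (h2 : s2 ∈ circleSG a b r) (hd : det2 (toQ s1) (toQ s2) ≠ 0) :
    0 < circlePolar a b r s1 s2 := by
  have hB1 := (circleLin_pos_of_mem hA.le h1 (left_ne_zero_of_det2_ne_zero hd)).le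
  have hB2 := (circleLin_pos_of_mem hA.le h2 (right_ne_zero_of_det2_ne_zero hd)).le
  have hg1 := circleDisc_nonneg_of_mem hA h1
  have hg2 := circleDisc_nonneg_of_mem hA h2
  have hD : (s1 0 * s2 1 - s1 1 * s2 0 : ℝ) ≠ 0 := by
    rw [det2_toQ] at hd
    exact_mod_cast hd
  have hid : circlePolar a b r s1 s2 ^ 2 - circleDisc a b r s1 * circleDisc a b r s2 =
      (a ^ 2 + b ^ 2 - r ^ 2) * r ^ 2 * (s1 0 * s2 1 - s1 1 * s2 0 : ℝ) ^ 2 := by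
    simp only [circlePolar, circleDisc, circleLin, normSq]; push_cast; ring
  have hlag : (normSq s1 : ℝ) * normSq s2 =
      ((s1 0 * s2 0 + s1 1 * s2 1 : ℕ) : ℝ) ^ 2 + (s1 0 * s2 1 - s1 1 * s2 0 : ℝ) ^ 2 := by
    simp only [normSq]; push_cast; ring
  have hnonneg : 0 ≤ circlePolar a b r s1 s2 := by
    have := mul_le_mul_of_sq_le_mul (N₁ := normSq s1) (N₂ := normSq s2)
      (d := (s1 0 * s2 0 + s1 1 * s2 1 : ℕ)) hA.le hB1 hB2 (Nat.cast_nonneg _) (Nat.cast_nonneg _)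
      (by unfold circleDisc at hg1; linarith) (by unfold circleDisc at hg2; linarith)
      (by rw [hlag]; exact le_add_of_nonneg_right (sq_nonneg _))
    unfold circlePolar; linarith
  have hpos : 0 < (a ^ 2 + b ^ 2 - r ^ 2) * r ^ 2 * (s1 0 * s2 1 - s1 1 * s2 0 : ℝ) ^ 2 := by
    positivity
  refine hnonneg.lt_of_ne fun h => ?_
  rw [← h] at hid
  nlinarith [mul_nonneg hg1 hg2]

lemma circleLin_pos_of_coordN_pos (hA : 0 ≤ a ^ 2 + b ^ 2 - r ^ 2) {s1 s2 x : Fin 2 → ℕ}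
    (h1 : s1 ∈ circleSG a b r) (h2 : s2 ∈ circleSG a b r) (hd : det2 (toQ s1) (toQ s2) ≠ 0)
    (hx : 0 < coordN s1 s2 x ∧ 0 < coordN s2 s1 x) : 0 < circleLin a b x := by
  have hα : (0 : ℝ) < coordN s1 s2 x := by exact_mod_cast hx.1
  have hβ : (0 : ℝ) < coordN s2 s1 x := by exact_mod_cast hx.2
  rw [circleLin_eq_of_coord (natCast_eq_coordN hd x)]
  exact add_pos (mul_pos hα (circleLin_pos_of_mem hA h1 (left_ne_zero_of_det2_ne_zero hd)))
    (mul_pos hβ (circleLin_pos_of_mem hA h2 (right_ne_zero_of_det2_ne_zero hd)))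

/-- Outside the circle semigroup, `circleDisc < A² / 4` bounds the coordinates of interior
points, since they are at least `1 / |det|`. -/
lemma coordN_add_mul_lt_of_notMem (hA : 0 < a ^ 2 + b ^ 2 - r ^ 2) (hr : r ≠ 0)
    {s1 s2 x : Fin 2 → ℕ} (h1 : s1 ∈ circleSG a b r) (h2 : s2 ∈ circleSG a b r)
    (hd : det2 (toQ s1) (toQ s2) ≠ 0) (hx : 0 < coordN s1 s2 x ∧ 0 < coordN s2 s1 x)
    (hxS : x ∉ circleSG a b r) :
    ((coordN s1 s2 x : ℝ) + coordN s2 s1 x) * ((|det2 (toQ s1) (toQ s2)|⁻¹ : ℚ) : ℝ) *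
      circlePolar a b r s1 s2 < (a ^ 2 + b ^ 2 - r ^ 2) ^ 2 / 4 := by
  set α : ℝ := (coordN s1 s2 x : ℝ)
  set β : ℝ := (coordN s2 s1 x : ℝ)
  set δ : ℝ := ((|det2 (toQ s1) (toQ s2)|⁻¹ : ℚ) : ℝ)
  have hδ : 0 < δ := Rat.cast_pos.mpr (inv_pos.mpr (abs_pos.mpr hd))
  have hδα : δ ≤ α := Rat.cast_le.mpr (inv_abs_det2_le_coordN hx.1)
  have hδβ : δ ≤ β := by
    have := inv_abs_det2_le_coordN hx.2
    rw [det2_swap, abs_neg] at this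
    exact Rat.cast_le.mpr this
  have hdisc : circleDisc a b r x < (a ^ 2 + b ^ 2 - r ^ 2) ^ 2 / 4 := by
    by_contra! h
    refine hxS ((mem_circleSG_iff x).mpr (exists_nat_quadratic_nonpos_of_pos hA
      (circleLin_pos_of_coordN_pos hA.le h1 h2 hd hx).le ?_))
    unfold circleDisc at h
    linarith
  rw [circleDisc_eq_of_coord (natCast_eq_coordN hd x)] at hdisc
  have hP := circlePolar_pos hA hr h1 h2 hd
  have k : (α + β) * δ ≤ 2 * α * β := by nlinarith
  calc (α + β) * δ * circlePolar a b r s1 s2 ≤ 2 * α * β * circlePolar a b r s1 s2 :=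
        mul_le_mul_of_nonneg_right k hP.le
    _ ≤ α ^ 2 * circleDisc a b r s1 + 2 * α * β * circlePolar a b r s1 s2 +
        β ^ 2 * circleDisc a b r s2 := by
      nlinarith [mul_nonneg (sq_nonneg α) (circleDisc_nonneg_of_mem hA h1),
        mul_nonneg (sq_nonneg β) (circleDisc_nonneg_of_mem hA h2)]
    _ < _ := hdisc

lemma finite_diff_circleSG_of_pos (hA : 0 < a ^ 2 + b ^ 2 - r ^ 2) (hr : r ≠ 0)
    {s1 s2 : Fin 2 → ℕ} (h1 : s1 ∈ circleSG a b r) (h2 : s2 ∈ circleSG a b r)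
    (hd : det2 (toQ s1) (toQ s2) ≠ 0) :
    ({x | 0 < coordN s1 s2 x ∧ 0 < coordN s2 s1 x} \ circleSG a b r).Finite := by
  set δP : ℝ := ((|det2 (toQ s1) (toQ s2)|⁻¹ : ℚ) : ℝ) * circlePolar a b r s1 s2
  have hδP : 0 < δP :=
    mul_pos (Rat.cast_pos.mpr (inv_pos.mpr (abs_pos.mpr hd))) (circlePolar_pos hA hr h1 h2 hd)
  set M : ℝ := (a ^ 2 + b ^ 2 - r ^ 2) ^ 2 / 4 / δP
  refine (Set.Finite.pi (t := fun i => Set.Iic ⌈M * (s1 i + s2 i)⌉₊)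
    fun _ => Set.finite_Iic _).subset ?_
  rintro x ⟨hx, hxS⟩
  have hsum : (coordN s1 s2 x : ℝ) + coordN s2 s1 x < M := by
    rw [lt_div_iff₀ hδP, ← mul_assoc]
    exact coordN_add_mul_lt_of_notMem hA hr h1 h2 hd hx hxS
  have hα : (0 : ℝ) < coordN s1 s2 x := by exact_mod_cast hx.1
  have hβ : (0 : ℝ) < coordN s2 s1 x := by exact_mod_cast hx.2
  simp only [Set.mem_pi, Set.mem_univ, Set.mem_Iic, forall_const]
  intro i
  have hxi : (x i : ℝ) ≤ M * (s1 i + s2 i) := by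
    rw [natCast_eq_coordN hd x i]
    nlinarith [(s1 i).cast_nonneg (α := ℝ), (s2 i).cast_nonneg (α := ℝ)]
  exact Nat.cast_le.mp (hxi.trans (Nat.le_ceil _))

theorem Simplicial.finite_interiorOf_diff_circleSG (hr : r ≠ 0) {s1 s2 : Fin 2 → ℕ}
    (hs : Simplicial (circleSG a b r) s1 s2) (h1 : s1 ∈ circleSG a b r)
    (h2 : s2 ∈ circleSG a b r) :
    (interiorOf (coneN (circleSG a b r)) s1 s2 \ circleSG a b r).Finite := by
  have hint : interiorOf (coneN (circleSG a b r)) s1 s2 =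
      {x | 0 < coordN s1 s2 x ∧ 0 < coordN s2 s1 x} :=
    Set.ext fun _ => hs.mem_interiorOf_iff
  rw [hint]
  rcases lt_trichotomy (a ^ 2 + b ^ 2 - r ^ 2) 0 with hA | hA | hA
  · simp [circleSG_eq_univ hA]
  · refine Set.finite_empty.subset fun x ⟨hx, hxS⟩ => hxS ((mem_circleSG_iff x).mpr ?_)
    exact exists_nat_quadratic_nonpos_of_nonpos hA.le
      (circleLin_pos_of_coordN_pos hA.ge h1 h2 hs.det2_ne_zero hx) _
  · exact finite_diff_circleSG_of_pos hA hr h1 h2 hs.det2_ne_zero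

end CircleSG

/-- A simplicial affine circle semigroup `𝔖` is Buchsbaum iff
`int(𝒞) = int(𝔖̄)` and `𝔖̄ ∩ τ_j` is generated by a single element for `j = 1, 2`. -/
theorem stmt6 (a b r : ℝ) (hr : 0 < r) (S : Set (Fin 2 → ℕ)) (hS : S = circleSG a b r)
    (G : Finset (Fin 2 → ℕ)) (hG : minimalGenSet S G)
    (v1 v2 : Fin 2 → ℕ) (hsimp : Simplicial S v1 v2) :
    IsBuchsbaumSG S G (coneN S) (rayN v1) (rayN v2) ↔
      (interiorOf (coneN S) v1 v2 = interiorOf (sbar S G) v1 v2 ∧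
        genByOne (sbar S G ∩ rayN v1) ∧ genByOne (sbar S G ∩ rayN v2)) := by
  obtain ⟨s1, hs1, s2, hs2, hs, h1, h2⟩ := hsimp.exists_simplicial_mem
  have hfin : (interiorOf (coneN S) s1 s2 \ S).Finite := by
    subst hS
    exact hs.finite_interiorOf_diff_circleSG hr.ne' hs1 hs2
  simpa only [interiorOf, h1, h2] using hs.isBuchsbaumSG_iff hG hfin
end

section
/- Let F be a convex quadrilateral with vertices P_1,…,P_4 ∈ ℚ^2_{≥0} such that P_1 lies on the extremal ray τ_1, P_4 lies on the extremal ray τ_2, and O, P_2, P_3 are collinear on a line through the origin. Let 𝒞_1 be the cone delimited by τ_1 and the ray OP_2, and 𝒞_2 the cone delimited by OP_2 and τ_2. Then 𝒞 = 𝒞_1 ∪ 𝒞_2 and the convex polygonal semigroup 𝔓 of F equals 𝔓_1 ∪ 𝔓_2, where 𝔓_1, 𝔓_2 are the convex polygonal semigroups of the triangles with vertex sets {P_1,P_2,P_3} and {P_2,P_3,P_4} respectively. -/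
open Set
open scoped Pointwise

/-!
Indices are shifted by one: the paper's `P_k` is `P (k - 1)`.

Since the semigroup is simplicial with extremal rays through `P_1` and `P_4`, every vertex
lies in the cone spanned by `P_1, P_4`; in particular `P_2 = a P_1 + b P_4` with `a, b ≥ 0`,
which splits that cone along the ray `O P_2`, and the ray meets the diagonal `[P_1, P_4]` at
`w = P_2 / (a + b)`. The points `w, P_2, P_3` lie on one line, and as `P_2, P_3` are vertices
neither lies between `w` and the other, so `w ∈ [P_2, P_3]`. The two diagonals of `F` thus
cross, `[P_2, P_3]` cuts `F` into the two triangles, and dilation commutes with unions.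
-/

lemma Collinear.smul_insert {𝕜 E : Type*} [Field 𝕜] [AddCommGroup E] [Module 𝕜 E] {u v : E}
    (h : Collinear 𝕜 {0, u, v}) (c : 𝕜) : Collinear 𝕜 {c • u, u, v} := by
  have hcu : c • u ∈ affineSpan 𝕜 {0, u, v} :=
    affineSpan_mono 𝕜 (show {0, u} ⊆ ({0, u, v} : Set E) by grind)
      (by simpa [AffineMap.lineMap_apply_module'] using
        AffineMap.lineMap_mem_affineSpan_pair c 0 u)
  exact ((collinear_insert_iff_of_mem_affineSpan hcu).2 h).subset (by grind)

section Segments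

variable {𝕜 E : Type*} [Field 𝕜] [LinearOrder 𝕜] [IsStrictOrderedRing 𝕜] [AddCommGroup E]
  [Module 𝕜 E]

lemma mem_segment_or_mem_segment_of_mem_segment {x y z w : E} (hy : y ∈ segment 𝕜 x z)
    (hw : w ∈ segment 𝕜 x z) : y ∈ segment 𝕜 x w ∨ y ∈ segment 𝕜 w z := by
  simp only [mem_segment_iff_wbtw] at *
  have hray : SameRay 𝕜 (y -ᵥ x) (w -ᵥ x) := by
    refine hy.sameRay_vsub_left.trans hw.sameRay_vsub_left.symm fun hzx => Or.inl ?_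
    rw [vsub_eq_zero_iff_eq] at hzx ⊢
    subst hzx
    exact (wbtw_self_iff 𝕜).1 hy
  exact (wbtw_total_of_sameRay_vsub_left hray).imp id hy.trans_left_right

lemma Collinear.mem_segment_of_notMem_segment {x y z : E} (h : Collinear 𝕜 {x, y, z})
    (hy : y ∉ segment 𝕜 x z) (hz : z ∉ segment 𝕜 y x) : x ∈ segment 𝕜 y z := by
  simp only [mem_segment_iff_wbtw] at *
  rcases h.wbtw_or_wbtw_or_wbtw with h | h | h
  exacts [(hy h).elim, (hz h).elim, h.symm]

lemma convexHull_four_eq_union_of_mem_segment {p₀ p₁ p₂ p₃ w : E}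
    (h₀₃ : w ∈ segment 𝕜 p₀ p₃) (h₁₂ : w ∈ segment 𝕜 p₁ p₂) :
    convexHull 𝕜 {p₀, p₁, p₂, p₃} = convexHull 𝕜 {p₀, p₁, p₂} ∪ convexHull 𝕜 {p₁, p₂, p₃} := by
  refine subset_antisymm ?_
    (union_subset (convexHull_mono (by grind)) (convexHull_mono (by grind)))
  have hsplit : ({p₀, p₁, p₂, p₃} : Set E) = {p₀, p₃} ∪ {p₁, p₂} := by grind
  have h₁₂_sub : ∀ {s : Set E}, p₁ ∈ s → p₂ ∈ s → segment 𝕜 p₁ p₂ ⊆ convexHull 𝕜 s :=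
    fun h₁ h₂ => (convex_convexHull 𝕜 _).segment_subset (subset_convexHull 𝕜 _ h₁)
      (subset_convexHull 𝕜 _ h₂)
  rw [hsplit, convexHull_union (by simp) (by simp), convexHull_pair, convexHull_pair]
  intro y hy
  obtain ⟨a, ha, b, hb, hy⟩ := mem_convexJoin.1 hy
  rcases mem_segment_or_mem_segment_of_mem_segment ha h₀₃ with ha | ha
  · refine Or.inl ((convex_convexHull 𝕜 _).segment_subset ?_ (h₁₂_sub (by simp) (by simp) hb) hy)
    exact (convex_convexHull 𝕜 _).segment_subset (subset_convexHull 𝕜 _ (by simp))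
      (h₁₂_sub (by simp) (by simp) h₁₂) ha
  · refine Or.inr ((convex_convexHull 𝕜 _).segment_subset ?_ (h₁₂_sub (by simp) (by simp) hb) hy)
    exact (convex_convexHull 𝕜 _).segment_subset (h₁₂_sub (by simp) (by simp) h₁₂)
      (subset_convexHull 𝕜 _ (by simp)) ha

lemma mem_segment_of_collinear_of_mem_segment {P : Fin 4 → E}
    (hP : ∀ j, P j ∉ convexHull 𝕜 (P '' {k | k ≠ j})) {w : E} (hw : w ∈ segment 𝕜 (P 0) (P 3))
    (hcol : Collinear 𝕜 {w, P 1, P 2}) : w ∈ segment 𝕜 (P 1) (P 2) := by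
  have hmem : ∀ {j k}, k ≠ j → P k ∈ convexHull 𝕜 (P '' {k | k ≠ j}) :=
    fun h => subset_convexHull 𝕜 _ ⟨_, h, rfl⟩
  have hw_mem : ∀ {j}, j ≠ 0 → j ≠ 3 → w ∈ convexHull 𝕜 (P '' {k | k ≠ j}) := fun h0 h3 =>
    (convex_convexHull 𝕜 _).segment_subset (hmem h0.symm) (hmem h3.symm) hw
  refine hcol.mem_segment_of_notMem_segment (fun h => hP 1 ?_) (fun h => hP 2 ?_)
  · exact (convex_convexHull 𝕜 _).segment_subset (hw_mem (by decide) (by decide))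
      (hmem (by decide)) h
  · exact (convex_convexHull 𝕜 _).segment_subset (hmem (by decide))
      (hw_mem (by decide) (by decide)) h

end Segments

lemma coneQ_eq_hull (G : Set (Fin 2 → ℚ)) : coneQ G = PointedCone.hull ℚ G := by
  ext x
  rw [SetLike.mem_coe, Submodule.mem_span_set']
  constructor
  · rintro ⟨n, q, f, hq, hf, rfl⟩
    exact ⟨n, fun i => ⟨q i, hq i⟩, fun i => ⟨f i, hf i⟩, rfl⟩
  · rintro ⟨n, q, f, rfl⟩
    exact ⟨n, fun i => q i, fun i => f i, fun i => (q i).2, fun i => (f i).2, rfl⟩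

lemma mem_coneQ_pair {u v x : Fin 2 → ℚ} :
    x ∈ coneQ {u, v} ↔ ∃ a b : ℚ, 0 ≤ a ∧ 0 ≤ b ∧ x = a • u + b • v := by
  rw [coneQ_eq_hull, SetLike.mem_coe, Submodule.mem_span_pair]
  constructor
  · rintro ⟨a, b, rfl⟩
    exact ⟨a, b, a.2, b.2, rfl⟩
  · rintro ⟨a, b, ha, hb, rfl⟩
    exact ⟨⟨a, ha⟩, ⟨b, hb⟩, rfl⟩

lemma coneQ_convexHull (G : Set (Fin 2 → ℚ)) : coneQ (convexHull ℚ G) = coneQ G := by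
  simp only [coneQ_eq_hull]
  exact congrArg _ (le_antisymm
    (Submodule.span_le.2 (convexHull_min PointedCone.subset_hull (PointedCone.convex _)))
    (Submodule.span_mono (subset_convexHull ℚ G)))

lemma coneQ_eq_of_subset_of_subset_coneQ {G H : Set (Fin 2 → ℚ)} (hHG : H ⊆ G)
    (hGH : G ⊆ coneQ H) : coneQ G = coneQ H := by
  simp only [coneQ_eq_hull] at hGH ⊢
  exact congrArg _ (le_antisymm (Submodule.span_le.2 hGH) (Submodule.span_mono hHG))

lemma coneQ_pair_eq_union {u w : Fin 2 → ℚ} {a b : ℚ} (ha : 0 ≤ a) (hb : 0 ≤ b)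
    (hab : 0 < a + b) :
    coneQ {u, w} = coneQ {u, a • u + b • w} ∪ coneQ {a • u + b • w, w} := by
  ext x
  simp only [mem_union, mem_coneQ_pair]
  constructor
  · rintro ⟨p, q, hp, hq, rfl⟩
    rcases le_or_gt (q * a) (p * b) with h | h
    · left
      rcases hb.lt_or_eq with hb | rfl
      · refine ⟨p - q * a / b, q / b, ?_, by positivity, ?_⟩
        · rw [sub_nonneg, div_le_iff₀ hb]; linarith
        · match_scalars <;> field_simp; ring
      · obtain rfl : q = 0 := by nlinarith
        exact ⟨p, 0, hp, le_rfl, by simp⟩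
    · right
      have ha : 0 < a := pos_of_mul_pos_right (by nlinarith : 0 < q * a) hq
      refine ⟨p / a, q - p * b / a, by positivity, ?_, ?_⟩
      · rw [sub_nonneg, div_le_iff₀ ha]; linarith
      · match_scalars <;> field_simp; ring
  · rintro (⟨α, β, hα, hβ, rfl⟩ | ⟨α, β, hα, hβ, rfl⟩)
    · exact ⟨α + β * a, β * b, by positivity, by positivity, by module⟩
    · exact ⟨α * a, α * b + β, by positivity, by positivity, by module⟩

lemma exists_toQ_eq_natCast_smul {y : Fin 2 → ℚ} (hy : ∀ i, 0 ≤ y i) :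
    ∃ d : ℕ, 0 < d ∧ ∃ x : Fin 2 → ℕ, toQ x = (d : ℚ) • y := by
  refine ⟨(y 0).den * (y 1).den, by positivity,
    ![(y 0).num.toNat * (y 1).den, (y 1).num.toNat * (y 0).den], ?_⟩
  have hnum : ∀ i, ((y i).num.toNat : ℚ) = y i * (y i).den := fun i => by
    rw [Rat.mul_den_eq_num]; exact_mod_cast Int.toNat_of_nonneg (Rat.num_nonneg.2 (hy i))
  funext i
  fin_cases i <;> simp [toQ] <;> rw [hnum] <;> ring

lemma mem_coneQ_polySG {F : Set (Fin 2 → ℚ)} {y : Fin 2 → ℚ} (hyF : y ∈ F)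
    (hy : ∀ i, 0 ≤ y i) : y ∈ coneQ (toQ '' polySG F) := by
  obtain ⟨d, hd, x, hx⟩ := exists_toQ_eq_natCast_smul hy
  have hxF : x ∈ polySG F := ⟨d, hx ▸ smul_mem_smul_set hyF⟩
  rw [← inv_smul_smul₀ (Nat.cast_ne_zero.2 hd.ne' : (d : ℚ) ≠ 0) y, ← hx, coneQ_eq_hull]
  exact PointedCone.smul_mem _ (by positivity) (PointedCone.subset_hull ⟨x, hxF, rfl⟩)

lemma polySG_union (S T : Set (Fin 2 → ℚ)) : polySG (S ∪ T) = polySG S ∪ polySG T := by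
  ext x
  simp [polySG, smul_set_union, exists_or]

theorem stmt13_general (P : Fin 4 → (Fin 2 → ℚ)) (hpos : ∀ j i, 0 ≤ P j i)
    (hvert : ∀ j, P j ∉ convexHull ℚ (P '' {k | k ≠ j}))
    (p1 p4 : Fin 2 → ℕ) (h1 : toQ p1 = P 0) (h4 : toQ p4 = P 3)
    (hP2 : P 1 ≠ 0)
    (hcol : Collinear ℚ {0, P 1, P 2})
    (hsimp : Simplicial (polySG (convexHull ℚ (Set.range P))) p1 p4) :
    {x : Fin 2 → ℕ | toQ x ∈ coneQ (convexHull ℚ (Set.range P))} =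
        {x : Fin 2 → ℕ | toQ x ∈ coneQ {toQ p1, P 1}} ∪
          {x : Fin 2 → ℕ | toQ x ∈ coneQ {P 1, toQ p4}} ∧
      polySG (convexHull ℚ (Set.range P)) =
        polySG (convexHull ℚ {P 0, P 1, P 2}) ∪
          polySG (convexHull ℚ {P 1, P 2, P 3}) := by
  have hvertex_cone : ∀ j, P j ∈ coneQ {P 0, P 3} := fun j => by
    rw [← h1, ← h4, ← hsimp.2.2.2]
    exact mem_coneQ_polySG (subset_convexHull ℚ _ (mem_range_self j)) (hpos j)
  have hcone : coneQ (convexHull ℚ (range P)) = coneQ {P 0, P 3} := by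
    rw [coneQ_convexHull]
    exact coneQ_eq_of_subset_of_subset_coneQ (by grind) (range_subset_iff.2 hvertex_cone)
  obtain ⟨a, b, ha, hb, hP1⟩ := mem_coneQ_pair.1 (hvertex_cone 1)
  have hab : 0 < a + b := by
    refine (add_nonneg ha hb).lt_of_ne fun h => hP2 ?_
    obtain ⟨rfl, rfl⟩ := (add_eq_zero_iff_of_nonneg ha hb).1 h.symm
    simp [hP1]
  have hw03 : (a + b)⁻¹ • P 1 ∈ segment ℚ (P 0) (P 3) :=
    mem_segment_iff_div.2 ⟨a, b, ha, hb, hab, by rw [hP1]; module⟩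
  have hw12 := mem_segment_of_collinear_of_mem_segment hvert hw03 (hcol.smul_insert _)
  refine ⟨?_, ?_⟩
  · rw [hcone, hP1, coneQ_pair_eq_union ha hb hab, h1, h4]
    rfl
  · have hrange : range P = {P 0, P 1, P 2, P 3} := by
      ext; simp [Fin.exists_fin_succ, eq_comm]
    rw [hrange, convexHull_four_eq_union_of_mem_segment hw03 hw12, polySG_union]

/-- With `F` a convex quadrilateral as above whose diagonal
`P_2 P_3` passes through the origin, the cone `𝒞` splits as `𝒞_1 ∪ 𝒞_2` along the
ray `O P_2`, and `𝔓 = 𝔓_1 ∪ 𝔓_2` where `𝔓_1, 𝔓_2` are the semigroups of the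
triangles `{P_1,P_2,P_3}` and `{P_2,P_3,P_4}`. -/
theorem stmt13 (P : Fin 4 → (Fin 2 → ℚ)) (hpos : ∀ j i, 0 ≤ P j i)
    (hvert : ∀ j, P j ∉ convexHull ℚ (P '' {k | k ≠ j}))
    (p1 p4 : Fin 2 → ℕ) (h1 : toQ p1 = P 0) (h4 : toQ p4 = P 3)
    (hP2 : P 1 ≠ 0) (hP3 : P 2 ≠ 0)
    (hcol : Collinear ℚ {0, P 1, P 2})
    (hsimp : Simplicial (polySG (convexHull ℚ (Set.range P))) p1 p4) :
    {x : Fin 2 → ℕ | toQ x ∈ coneQ (convexHull ℚ (Set.range P))} =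
        {x : Fin 2 → ℕ | toQ x ∈ coneQ {toQ p1, P 1}} ∪
          {x : Fin 2 → ℕ | toQ x ∈ coneQ {P 1, toQ p4}} ∧
      polySG (convexHull ℚ (Set.range P)) =
        polySG (convexHull ℚ {P 0, P 1, P 2}) ∪
          polySG (convexHull ℚ {P 1, P 2, P 3}) :=
  stmt13_general P hpos hvert p1 p4 h1 h4 hP2 hcol hsimp
end
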